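/- arXiv:1804.06560 — 2 statements merged into one kernel-verified Lean document; each statement's English description precedes it below -/
import Mathlib

section
/- First decomposition of the bulk derivative: for every C¹ function g : ℝ³ₓ × ℝ³_v → ℝ, every t ∈ ℝ, every x ∈ ℝ³ and every v ∈ ℝ³ with v ≠ 0, one has the ℝ³-valued identity D_v g(x,v) = ṽ · Ŝᵛg(x,v) + Σ_{i=1}^{3} Ṽᵢ · Ω̂ᵢᵛg(x,v) − d̃(t,x,v) · ( ṽ · Sˣg(x,v)/√(1+|v|²) + √(1+|v|²) Σ_{i=1}^{3} Ṽᵢ · Ωᵢˣg(x,v) ). -/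
noncomputable section

open MeasureTheory

abbrev E3 : Type := EuclideanSpace ℝ (Fin 3)

/-- Euclidean dot product on `ℝ³`. -/
def dot (x y : E3) : ℝ := ∑ i, x i * y i

/-- Standard basis vectors of `ℝ³`. -/
def ee (i : Fin 3) : E3 := EuclideanSpace.single i 1

def mkE3 (f : Fin 3 → ℝ) : E3 := (WithLp.equiv 2 (Fin 3 → ℝ)).symm f

/-- Cross product on `ℝ³`. -/
def cross (a b : E3) : E3 :=
  mkE3 ![a 1 * b 2 - a 2 * b 1, a 2 * b 0 - a 0 * b 2, a 0 * b 1 - a 1 * b 0]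

/-- Relativistic velocity `v̂ = v/√(1+|v|²)`. -/
def vhat (v : E3) : E3 := (Real.sqrt (1 + ‖v‖ ^ 2))⁻¹ • v

/-- `ṽ = v/|v|`. -/
def tv (v : E3) : E3 := ‖v‖⁻¹ • v

/-- `Ṽᵢ = eᵢ × ṽ`. -/
def tV (i : Fin 3) (v : E3) : E3 := cross (ee i) (tv v)

/-- Bundled properties of the fixed cutoff function `ψ̃`. -/
structure Cutoff (ψ : ℝ → ℝ) : Prop where
  smooth : ContDiff ℝ (⊤ : ℕ∞) ψ
  even : ∀ r : ℝ, ψ (-r) = ψ r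
  mem_Icc : ∀ r : ℝ, ψ r ∈ Set.Icc (0:ℝ) 1
  supp : ∀ r : ℝ, 3/2 < |r| → ψ r = 0
  one : ∀ r : ℝ, |r| ≤ 5/4 → ψ r = 1

def psiK (ψ : ℝ → ℝ) (k : ℤ) (r : ℝ) : ℝ := ψ (r / 2 ^ k) - ψ (r / 2 ^ (k - 1))

def psiLe (ψ : ℝ → ℝ) (k : ℤ) (r : ℝ) : ℝ := ψ (r / 2 ^ k)

def psiGe (ψ : ℝ → ℝ) (k : ℤ) (r : ℝ) : ℝ := 1 - ψ (r / 2 ^ (k - 1))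

def psiGe0 (ψ : ℝ → ℝ) (r : ℝ) : ℝ := 1 - ψ (2 * r)

def omegaP (x v : E3) : ℝ := dot x v + Real.sqrt ((dot x v) ^ 2 + ‖x‖ ^ 2)

def omegaM (x v : E3) : ℝ := dot x v - Real.sqrt ((dot x v) ^ 2 + ‖x‖ ^ 2)

def omegaC (ψ : ℝ → ℝ) (x v : E3) : ℝ := psiGe0 ψ (‖x‖ ^ 2 + (dot x v) ^ 2) * omegaP x v

/-- The inhomogeneous modulation `d̃(t,x,v)`. -/
def dmod (ψ : ℝ → ℝ) (t : ℝ) (x v : E3) : ℝ :=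
  t / (1 + ‖v‖ ^ 2) - omegaC ψ x v / Real.sqrt (1 + ‖v‖ ^ 2)

/-- Iterated directional derivatives along a list of directions. -/
def pds {V W : Type*} [NormedAddCommGroup V] [NormedSpace ℝ V]
    [NormedAddCommGroup W] [NormedSpace ℝ W] (ws : List V) (f : V → W) : V → W :=
  ws.foldr (fun w g => fun p => fderiv ℝ g p w) f

/-- Fourier transform `f̂(ξ) = ∫ e^{-ix·ξ} f(x) dx`. -/
def FT (f : E3 → ℂ) (ξ : E3) : ℂ :=
  ∫ x : E3, Complex.exp (-(Complex.I * (dot x ξ : ℂ))) * f x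

/-- Inverse Fourier transform. -/
def FTinv (g : E3 → ℂ) (x : E3) : ℂ :=
  (((2 * Real.pi) ^ 3 : ℝ))⁻¹ • ∫ ξ : E3, Complex.exp (Complex.I * (dot x ξ : ℂ)) * g ξ

/-- Fourier transform in `x` of a function of `(x,v)`. -/
def FTx (f : E3 × E3 → ℂ) (ξ v : E3) : ℂ :=
  ∫ x : E3, Complex.exp (-(Complex.I * (dot x ξ : ℂ))) * f (x, v)

/-- `L²` norm. -/
def L2 {α W : Type*} [MeasureSpace α] [NormedAddCommGroup W] (f : α → W) : ℝ :=
  (∫ x, ‖f x‖ ^ 2) ^ ((1:ℝ)/2)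

/-- The symbol norm `‖m‖_{S^∞_k}` (with multi-indices encoded as tuples of directions). -/
def Snorm (ψ : ℝ → ℝ) (m : E3 → ℂ) (k : ℤ) : ℝ :=
  ∑ n ∈ Finset.range 11, ∑ α : Fin n → Fin 3,
    (2:ℝ) ^ ((n : ℤ) * k) *
      ∫ x : E3, ‖FTinv (fun ξ => pds ((List.ofFn α).map ee) m ξ * (psiK ψ k ‖ξ‖ : ℂ)) x‖

/-- The `X_n` norm of the paper (real-valued version). -/
def XnormR (ψ : ℝ → ℝ) (n : ℕ) (u : E3 → ℂ) : ℝ :=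
  ⨆ k : ℤ, ⨆ ξ : E3,
    (2:ℝ) ^ (((n:ℤ)+1) * k) * ‖iteratedFDeriv ℝ n (FT u) ξ‖ * |psiK ψ k ‖ξ‖|

/-- The bulk derivative `D_v g = ∇_v g − t ∇_v v̂·∇ₓ g` as an `ℝ³`-valued quantity,
for `g` a function of `(x,v)` (at a fixed time `t`). -/
def DvVec (t : ℝ) (g : E3 × E3 → ℝ) (p : E3 × E3) : E3 :=
  mkE3 fun i => fderiv ℝ g p (-(t • fderiv ℝ vhat p.2 (ee i)), ee i)

/-- `Sᵛ = ṽ·∇_v`. -/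
def Sv (g : E3 × E3 → ℝ) (p : E3 × E3) : ℝ := fderiv ℝ g p (0, tv p.2)

/-- `Sˣ = ṽ·∇ₓ`. -/
def Sx (g : E3 × E3 → ℝ) (p : E3 × E3) : ℝ := fderiv ℝ g p (tv p.2, 0)

/-- `Ωᵢᵛ = Ṽᵢ·∇_v`. -/
def Omv (i : Fin 3) (g : E3 × E3 → ℝ) (p : E3 × E3) : ℝ := fderiv ℝ g p (0, tV i p.2)

/-- `Ωᵢˣ = Ṽᵢ·∇ₓ`. -/
def Omx (i : Fin 3) (g : E3 × E3 → ℝ) (p : E3 × E3) : ℝ := fderiv ℝ g p (tV i p.2, 0)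

/-- `Ŝᵛ = Sᵛ − (ω(x,v)/(1+|v|²)) Sˣ`. -/
def hatSv (ψ : ℝ → ℝ) (g : E3 × E3 → ℝ) (p : E3 × E3) : ℝ :=
  Sv g p - (omegaC ψ p.1 p.2 / (1 + ‖p.2‖ ^ 2)) * Sx g p

/-- `Ω̂ᵢᵛ = Ωᵢᵛ − ω(x,v) Ωᵢˣ`. -/
def hatOmv (ψ : ℝ → ℝ) (i : Fin 3) (g : E3 × E3 → ℝ) (p : E3 × E3) : ℝ :=
  Omv i g p - omegaC ψ p.1 p.2 * Omx i g p
lemma mkE3_apply (f : Fin 3 → ℝ) (i : Fin 3) : mkE3 f i = f i := rfl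

lemma inner_eq_dot (v w : E3) : (inner ℝ v w : ℝ) = dot v w := by
  simp [PiLp.inner_apply, dot, RCLike.inner_apply, mul_comm]

lemma dot_expand (x y : E3) : dot x y = x 0 * y 0 + x 1 * y 1 + x 2 * y 2 := by
  simp [dot, Fin.sum_univ_three]

lemma hasFDerivAt_vhat (v : E3) :
    HasFDerivAt vhat
      ((Real.sqrt (1 + ‖v‖ ^ 2))⁻¹ • (ContinuousLinearMap.id ℝ E3)
        + ((-((Real.sqrt (1 + ‖v‖ ^ 2)) ^ 3)⁻¹) • (innerSL ℝ v)).smulRight v) v := by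
  set S := Real.sqrt (1 + ‖v‖ ^ 2) with hSdef
  have hpos : (0:ℝ) < 1 + ‖v‖ ^ 2 := by positivity
  have hSpos : 0 < S := Real.sqrt_pos.mpr hpos
  have hS2 : S ^ 2 = 1 + ‖v‖ ^ 2 := Real.sq_sqrt hpos.le
  have h1 : HasFDerivAt (fun v : E3 => 1 + ‖v‖ ^ 2) (2 • innerSL ℝ v) v :=
    (hasStrictFDerivAt_norm_sq v).hasFDerivAt.const_add 1
  have h2 : HasDerivAt Real.sqrt (1 / (2 * S)) (1 + ‖v‖ ^ 2) :=
    Real.hasDerivAt_sqrt hpos.ne'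
  have h3 := h2.comp_hasFDerivAt v h1
  have h4 := (hasDerivAt_inv hSpos.ne').comp_hasFDerivAt v h3
  have h5 := h4.smul (hasFDerivAt_id (𝕜 := ℝ) v)
  refine HasFDerivAt.congr_fderiv (f := vhat) h5 ?_
  ext w
  simp [ContinuousLinearMap.smul_apply, ContinuousLinearMap.smulRight_apply]
  rw [← hSdef]
  ring

lemma fderiv_vhat_apply (v w : E3) :
    fderiv ℝ vhat v w
      = (Real.sqrt (1 + ‖v‖ ^ 2))⁻¹ • w
        - (((Real.sqrt (1 + ‖v‖ ^ 2)) ^ 3)⁻¹ * dot v w) • v := by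
  rw [(hasFDerivAt_vhat v).fderiv]
  simp [ContinuousLinearMap.smulRight_apply, inner_eq_dot, sub_eq_add_neg, neg_smul, smul_smul,
    dot]

lemma decomp (w : E3) : w = ∑ j, w j • ee j := by
  ext i
  fin_cases i <;> simp [ee, Fin.sum_univ_three, EuclideanSpace.single_apply]

lemma clm_fst (L : (E3 × E3) →L[ℝ] ℝ) (p : E3) :
    L (p, 0) = dot p (mkE3 fun j => L (ee j, 0)) := by
  conv_lhs => rw [decomp p]
  have : ((∑ j, p j • ee j : E3), (0:E3)) = ∑ j : Fin 3, p j • ((ee j, (0:E3))) := by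
    rw [Prod.ext_iff]
    simp [Prod.fst_sum, Prod.snd_sum]
  rw [this, map_sum]
  rw [dot_expand, Fin.sum_univ_three]
  have e : ∀ j : Fin 3, L ((p j • ee j : E3), (0:E3)) = p j * L (ee j, 0) := by
    intro j
    have : ((p j • ee j : E3), (0:E3)) = p j • ((ee j, (0:E3))) := by simp
    rw [this, _root_.map_smul, smul_eq_mul]
  simp [e, mkE3_apply]

lemma clm_snd (L : (E3 × E3) →L[ℝ] ℝ) (q : E3) :
    L (0, q) = dot q (mkE3 fun j => L (0, ee j)) := by
  conv_lhs => rw [decomp q]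
  have : ((0:E3), (∑ j, q j • ee j : E3)) = ∑ j : Fin 3, q j • (((0:E3), ee j)) := by
    rw [Prod.ext_iff]
    simp [Prod.fst_sum, Prod.snd_sum]
  rw [this, map_sum]
  rw [dot_expand, Fin.sum_univ_three]
  have e : ∀ j : Fin 3, L ((0:E3), (q j • ee j : E3)) = q j * L (0, ee j) := by
    intro j
    have : ((0:E3), (q j • ee j : E3)) = q j • (((0:E3), ee j)) := by simp
    rw [this, _root_.map_smul, smul_eq_mul]
  simp [e, mkE3_apply]

lemma clm_pair (L : (E3 × E3) →L[ℝ] ℝ) (p q : E3) :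
    L (p, q) = L (p, 0) + L (0, q) := by
  rw [← map_add]
  norm_num

lemma sum_cross (u A : E3) (hu : u 0 ^ 2 + u 1 ^ 2 + u 2 ^ 2 = 1) :
    ∑ i, dot (cross (ee i) u) A • cross (ee i) u = A - dot u A • u := by
  ext j
  fin_cases j
  · simp [Fin.sum_univ_three, cross, mkE3_apply, dot_expand, ee,
      EuclideanSpace.single_apply, Matrix.cons_val_zero, Matrix.cons_val_one]
    linear_combination A 0 * hu
  · simp [Fin.sum_univ_three, cross, mkE3_apply, dot_expand, ee,
      EuclideanSpace.single_apply, Matrix.cons_val_zero, Matrix.cons_val_one]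
    linear_combination A 1 * hu
  · simp [Fin.sum_univ_three, cross, mkE3_apply, dot_expand, ee,
      EuclideanSpace.single_apply, Matrix.cons_val_zero, Matrix.cons_val_one]
    linear_combination A 2 * hu

/-- first decomposition of `D_v`, Lemma 3.3, eqn (3.17):
`D_v = (ṽ Ŝᵛ + Σᵢ Ṽᵢ Ω̂ᵢᵛ) − d̃(t,x,v)(ṽ Sˣ/√(1+|v|²) + √(1+|v|²) Σᵢ Ṽᵢ Ωᵢˣ)`. -/
theorem stmt_6 (ψ : ℝ → ℝ) (hψ : Cutoff ψ)
    (g : E3 × E3 → ℝ) (hg : ContDiff ℝ 1 g) :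
    ∀ (t : ℝ) (x v : E3), v ≠ 0 →
      DvVec t g (x, v)
        = (hatSv ψ g (x, v)) • tv v + (∑ i, (hatOmv ψ i g (x, v)) • tV i v)
          - dmod ψ t x v •
              (((Real.sqrt (1 + ‖v‖ ^ 2))⁻¹ * Sx g (x, v)) • tv v
                + Real.sqrt (1 + ‖v‖ ^ 2) • ∑ i, (Omx i g (x, v)) • tV i v) := by
  intro t x v hv
  have hn : ‖v‖ ≠ 0 := norm_ne_zero_iff.mpr hv
  have hpos : (0:ℝ) < 1 + ‖v‖ ^ 2 := by positivity
  set S := Real.sqrt (1 + ‖v‖ ^ 2) with hSdef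
  have hS2 : S ^ 2 = 1 + ‖v‖ ^ 2 := Real.sq_sqrt hpos.le
  have hS0 : S ≠ 0 := (Real.sqrt_pos.mpr hpos).ne'
  set L := fderiv ℝ g (x, v) with hL
  set A : E3 := mkE3 fun j => L (ee j, 0) with hA
  set B : E3 := mkE3 fun j => L (0, ee j) with hB
  set u : E3 := tv v with hudef
  set w : ℝ := omegaC ψ x v with hw
  have hukv : ∀ k : Fin 3, u k = ‖v‖⁻¹ * v k := fun k => rfl
  have hvv : v 0 ^ 2 + v 1 ^ 2 + v 2 ^ 2 = ‖v‖ ^ 2 := by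
    rw [← real_inner_self_eq_norm_sq, inner_eq_dot, dot_expand]; ring
  have huu : u 0 ^ 2 + u 1 ^ 2 + u 2 ^ 2 = 1 := by
    rw [hukv 0, hukv 1, hukv 2]
    field_simp
    linarith [hvv]
  have hn2 : S ^ 2 - 1 = ‖v‖ * ‖v‖ := by rw [hS2]; ring
  have hDj : ∀ j : Fin 3, L (-(t • fderiv ℝ vhat v (ee j)), ee j)
      = B j - (t * S⁻¹) * A j
        + (t * (S ^ 3)⁻¹) * (v 0 * A 0 + v 1 * A 1 + v 2 * A 2) * v j := by
    intro j
    rw [fderiv_vhat_apply, clm_pair, clm_fst, clm_snd, ← hA, ← hB]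
    fin_cases j <;>
      simp [dot_expand, ee, EuclideanSpace.single_apply, PiLp.smul_apply, PiLp.sub_apply,
        PiLp.neg_apply, smul_eq_mul, mkE3_apply] <;> ring
  have hDv : DvVec t g (x, v)
      = B - (t * S⁻¹) • A + ((t * (S ^ 3)⁻¹) * (S ^ 2 - 1) * dot u A) • u := by
    ext j
    show L (-(t • fderiv ℝ vhat v (ee j)), ee j) = _
    rw [hDj j, hn2]
    simp only [PiLp.add_apply, PiLp.sub_apply, PiLp.smul_apply, smul_eq_mul, hukv, dot_expand]
    field_simp
  rw [hDv]
  have hSv : hatSv ψ g (x, v) = dot u B - (w / S ^ 2) * dot u A := by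
    rw [hatSv, Sv, Sx, hS2]
    show L (0, u) - _ * L (u, 0) = _
    rw [clm_fst, clm_snd, ← hA, ← hB, ← hw]
  have hSx : Sx g (x, v) = dot u A := by
    rw [Sx]; show L (u, 0) = _; rw [clm_fst, ← hA]
  have htV : ∀ i, tV i v = cross (ee i) u := fun i => rfl
  have hOmv : ∀ i, hatOmv ψ i g (x, v)
      = dot (cross (ee i) u) B - w * dot (cross (ee i) u) A := by
    intro i
    rw [hatOmv, Omv, Omx]
    show L (0, tV i v) - _ * L (tV i v, 0) = _
    rw [htV, clm_fst, clm_snd, ← hA, ← hB, ← hw]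
  have hOmx : ∀ i, Omx i g (x, v) = dot (cross (ee i) u) A := by
    intro i
    rw [Omx]; show L (tV i v, 0) = _; rw [htV, clm_fst, ← hA]
  have hdm : dmod ψ t x v = t / S ^ 2 - w / S := by
    rw [dmod, hS2, ← hw, ← hSdef]
  simp only [hSv, hSx, hOmv, hOmx, htV, hdm]
  have hsB : (∑ i, (dot (cross (ee i) u) B - w * dot (cross (ee i) u) A) • cross (ee i) u)
      = (B - dot u B • u) - w • (A - dot u A • u) := by
    rw [← sum_cross u B huu, ← sum_cross u A huu, Finset.smul_sum, ← Finset.sum_sub_distrib]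
    exact Finset.sum_congr rfl fun i _ => by rw [sub_smul, smul_smul]
  rw [hsB, sum_cross u A huu]
  match_scalars <;> field_simp <;> ring
end
end

section
/- Eigenfunction-type identities for the modulation: for μ ∈ {+,−} set Φ_μ(t,x,v) := t/√(1+|v|²) − ω_μ(x,v). Then for all t ∈ ℝ, all v ∈ ℝ³ with v ≠ 0, and all x ∈ ℝ³ with (x·v)² + |x|² > 0: (Sᵛ − t(1+|v|²)^{−3/2} Sˣ) Φ_μ(t,x,v) = μ · (ṽ·x)/√((x·v)² + |x|²) · Φ_μ(t,x,v), and for i = 1,2,3: (Ωᵢᵛ − t(1+|v|²)^{−1/2} Ωᵢˣ) Φ_μ(t,x,v) = μ · (Ṽᵢ·x)/√((x·v)² + |x|²) · Φ_μ(t,x,v), where the vector fields act in the variables (x,v) with t held fixed. -/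
noncomputable section

open MeasureTheory

/-- `Φ_μ(t,x,v) = t/√(1+|v|²) − ω_μ(x,v)` (with `μ = ±1`). -/
def PhiMod (μ t : ℝ) (p : E3 × E3) : ℝ :=
  t / Real.sqrt (1 + ‖p.2‖ ^ 2)
    - (dot p.1 p.2 + μ * Real.sqrt ((dot p.1 p.2) ^ 2 + ‖p.1‖ ^ 2))

open scoped RealInnerProductSpace

lemma dot_eq_inner' (x y : E3) : dot x y = ⟪x, y⟫ := by
  simp [dot, PiLp.inner_apply, RCLike.inner_apply, mul_comm]

lemma dot_comm' (x y : E3) : dot x y = dot y x := by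
  simp [dot, mul_comm]

lemma dot_smul_left' (c : ℝ) (x y : E3) : dot (c • x) y = c * dot x y := by
  simp [dot, Finset.mul_sum, mul_assoc]

open scoped RealInnerProductSpace in
lemma dot_v_tV (i : Fin 3) (v : E3) : ⟪v, tV i v⟫ = 0 := by
  rw [← dot_eq_inner']
  simp only [dot, tV, cross, mkE3, tv, Fin.sum_univ_three, WithLp.equiv_symm_apply, PiLp.toLp_apply,
    Matrix.cons_val_zero, Matrix.cons_val_one, Matrix.head_cons, Matrix.cons_val_two,
    Matrix.tail_cons, PiLp.smul_apply, smul_eq_mul]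
  ring

open scoped RealInnerProductSpace in
set_option maxHeartbeats 1000000 in
lemma phiMod_fderiv_apply (μ t : ℝ) (x v : E3) (hx : 0 < (dot x v) ^ 2 + ‖x‖ ^ 2) (h k : E3) :
    fderiv ℝ (PhiMod μ t) (x, v) (h, k) =
      -(t * ⟪v, k⟫) / (Real.sqrt (1 + ‖v‖ ^ 2)) ^ 3
      - ((⟪h, v⟫ + ⟪x, k⟫)
        + μ * ((dot x v * (⟪h, v⟫ + ⟪x, k⟫) + ⟪x, h⟫)
            / Real.sqrt ((dot x v) ^ 2 + ‖x‖ ^ 2))) := by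
  have hfun : PhiMod μ t = fun p : E3 × E3 =>
      t / Real.sqrt (1 + ⟪p.2, p.2⟫)
        - (⟪p.1, p.2⟫ + μ * Real.sqrt (⟪p.1, p.2⟫ * ⟪p.1, p.2⟫ + ⟪p.1, p.1⟫)) := by
    funext p
    rw [PhiMod, dot_eq_inner', ← real_inner_self_eq_norm_sq, ← real_inner_self_eq_norm_sq, pow_two]
  have hA := HasFDerivAt.inner ℝ (hasFDerivAt_fst (p := ((x, v) : E3 × E3)))
    (hasFDerivAt_snd (p := ((x, v) : E3 × E3)))
  have hNx := HasFDerivAt.inner ℝ (hasFDerivAt_fst (p := ((x, v) : E3 × E3)))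
    (hasFDerivAt_fst (p := ((x, v) : E3 × E3)))
  have hNv := HasFDerivAt.inner ℝ (hasFDerivAt_snd (p := ((x, v) : E3 × E3)))
    (hasFDerivAt_snd (p := ((x, v) : E3 × E3)))
  have hU := (hA.mul hA).add hNx
  have hUne : ⟪x, v⟫ * ⟪x, v⟫ + ⟪x, x⟫ ≠ 0 := by
    rw [real_inner_self_eq_norm_sq, ← dot_eq_inner', ← pow_two]; exact ne_of_gt hx
  have hsq1 := (Real.hasDerivAt_sqrt hUne).comp_hasFDerivAt ((x, v) : E3 × E3) hU
  have hVne : (1 : ℝ) + ⟪v, v⟫ ≠ 0 := by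
    rw [real_inner_self_eq_norm_sq]; positivity
  have hsq2ne : Real.sqrt (1 + ⟪v, v⟫) ≠ 0 := by
    rw [real_inner_self_eq_norm_sq]; positivity
  have hg : HasDerivAt (fun r : ℝ => t / Real.sqrt (1 + r))
      ((0 * Real.sqrt (1 + ⟪v, v⟫) - t * (1 / (2 * Real.sqrt (1 + ⟪v, v⟫))))
        / Real.sqrt (1 + ⟪v, v⟫) ^ 2) ⟪v, v⟫ :=
    (hasDerivAt_const _ t).div (((hasDerivAt_id _).const_add 1).sqrt hVne) hsq2ne
  have hdiv := HasDerivAt.comp_hasFDerivAt_of_eq ((x, v) : E3 × E3) hg hNv rfl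
  have hcomb := hdiv.sub (hA.add (hsq1.const_mul μ))
  rw [hfun]
  rw [HasFDerivAt.fderiv (hcomb.congr_of_eventuallyEq
      (f₁ := fun p : E3 × E3 => t / Real.sqrt (1 + ⟪p.2, p.2⟫)
        - (⟪p.1, p.2⟫ + μ * Real.sqrt (⟪p.1, p.2⟫ * ⟪p.1, p.2⟫ + ⟪p.1, p.1⟫)))
      (Filter.Eventually.of_forall fun p => rfl))]
  simp only [ContinuousLinearMap.sub_apply, ContinuousLinearMap.add_apply,
    ContinuousLinearMap.comp_apply, ContinuousLinearMap.prod_apply,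
    ContinuousLinearMap.smul_apply, ContinuousLinearMap.coe_fst', ContinuousLinearMap.coe_snd',
    fderivInnerCLM_apply, ContinuousLinearMap.smulRight_apply, ContinuousLinearMap.one_apply,
    ContinuousLinearMap.coe_smul', Pi.smul_apply, smul_eq_mul]
  have hRne : Real.sqrt (⟪x, v⟫ * ⟪x, v⟫ + ⟪x, x⟫) ≠ 0 :=
    Real.sqrt_ne_zero'.mpr (by
      rw [← pow_two, real_inner_self_eq_norm_sq, ← dot_eq_inner']; exact hx)
  rw [real_inner_comm k v, real_inner_comm h x, dot_eq_inner',
    ← real_inner_self_eq_norm_sq x, ← real_inner_self_eq_norm_sq v, pow_two (⟪x, v⟫)]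
  field_simp
  ring


set_option maxHeartbeats 1000000 in
/-- eqns (3.24)–(3.25) in the paper: `Φ_μ` is an eigenfunction of the
vector fields `Sᵛ − t(1+|v|²)^{-3/2}Sˣ` and `Ωᵢᵛ − t(1+|v|²)^{-1/2}Ωᵢˣ`. -/
theorem stmt_11 :
    ∀ μ : ℝ, (μ = 1 ∨ μ = -1) → ∀ (t : ℝ) (x v : E3), v ≠ 0 →
      0 < (dot x v) ^ 2 + ‖x‖ ^ 2 →
      (fderiv ℝ (PhiMod μ t) (x, v)
          (-(t / (Real.sqrt (1 + ‖v‖ ^ 2)) ^ 3) • tv v, tv v)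
        = μ * (dot (tv v) x / Real.sqrt ((dot x v) ^ 2 + ‖x‖ ^ 2)) * PhiMod μ t (x, v)) ∧
      ∀ i : Fin 3,
        fderiv ℝ (PhiMod μ t) (x, v)
            (-(t / Real.sqrt (1 + ‖v‖ ^ 2)) • tV i v, tV i v)
          = μ * (dot (tV i v) x / Real.sqrt ((dot x v) ^ 2 + ‖x‖ ^ 2))
              * PhiMod μ t (x, v) := by
  intro μ hμ t x v hv hx
  have hn : ‖v‖ ≠ 0 := norm_ne_zero_iff.mpr hv
  have hs : Real.sqrt (1 + ‖v‖ ^ 2) ≠ 0 := by positivity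
  have hR : Real.sqrt ((dot x v) ^ 2 + ‖x‖ ^ 2) ≠ 0 := Real.sqrt_ne_zero'.mpr hx
  have hs2 : Real.sqrt (1 + ‖v‖ ^ 2) ^ 2 = 1 + ‖v‖ ^ 2 := Real.sq_sqrt (by positivity)
  constructor
  · rw [phiMod_fderiv_apply μ t x v hx]
    simp only [tv, real_inner_smul_left, real_inner_smul_right, PhiMod]
    rw [dot_smul_left', dot_comm' v x]
    rw [dot_eq_inner' x v]
    rw [real_inner_self_eq_norm_sq]
    set a := (⟪x, v⟫ : ℝ) with ha
    set n := ‖v‖ with hndef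
    set s := Real.sqrt (1 + n ^ 2) with hsdef
    set R := Real.sqrt (a ^ 2 + ‖x‖ ^ 2) with hRdef
    have hR' : R ≠ 0 := by rw [hRdef, ha, ← dot_eq_inner']; exact hR
    rw [show n ^ 2 = s ^ 2 - 1 by rw [hs2]; ring]
    rcases hμ with rfl | rfl <;> (field_simp; ring)
  · intro i
    rw [phiMod_fderiv_apply μ t x v hx]
    simp only [real_inner_smul_left, real_inner_smul_right, PhiMod]
    rw [real_inner_comm v (tV i v)]
    simp only [dot_v_tV]
    rw [dot_comm' (tV i v) x, dot_eq_inner' x (tV i v), dot_eq_inner' x v]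
    set b := (⟪x, tV i v⟫ : ℝ) with hb
    set a := (⟪x, v⟫ : ℝ) with ha
    set s := Real.sqrt (1 + ‖v‖ ^ 2) with hsdef
    set R := Real.sqrt (a ^ 2 + ‖x‖ ^ 2) with hRdef
    have hR' : R ≠ 0 := by rw [hRdef, ha, ← dot_eq_inner']; exact hR
    rcases hμ with rfl | rfl <;> (field_simp; ring)
end
end
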